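/- arXiv:2003.08679 — 5 statements merged into one kernel-verified Lean document; each statement's English description precedes it below -/
import Mathlib

section
/- Let N be odd and let A be the (N+2)×(N+2) tridiagonal antisymmetric matrix with superdiagonal entries (h_α, h_β, h_1, ..., h_{N-1}), and let C = (0, 1, 0, ..., 0) be the second standard basis covector. Then the pair (A, C) is unobservable: the rank of the observability matrix (C; CA; ...; CA^{N+1}) is strictly less than N+2. -/
/-!
An antisymmetric matrix of odd size is singular, so `A` has a kernel vector `v`. Either
`h_α = 0`, and `e₀` is such a vector, or the first row of `A v = 0` reads `h_α v₁ = 0`; in both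
cases `v` can be taken with `C v = v₁ = 0`. Then `C Aⁱ v = 0` for all `i`, so `v` is a nonzero
vector in the kernel of the observability matrix (the PBH test at the eigenvalue `0`).
-/

open Matrix

/-- The n×n tridiagonal antisymmetric matrix with superdiagonal entries
`c 0, c 1, ..., c (n-2)`. -/
def triA (n : ℕ) (c : ℕ → ℝ) : Matrix (Fin n) (Fin n) ℝ :=
  Matrix.of fun i j =>
    if (i : ℕ) + 1 = (j : ℕ) then c i
    else if (j : ℕ) + 1 = (i : ℕ) then -(c j) else 0

/-- The superdiagonal sequence (h_α, h_β, h_1, ..., h_{N-1}), 0-indexed. -/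
def chain (hα hβ : ℝ) (h : ℕ → ℝ) : ℕ → ℝ :=
  fun k => if k = 0 then hα else if k = 1 then hβ else h (k - 1)

namespace Matrix

variable {K : Type*} [Field K] {ι : Type*} [Fintype ι]

theorem rank_lt_card_width_of_mulVec_eq_zero {κ : Type*} (M : Matrix κ ι K) {v : ι → K}
    (hv : v ≠ 0) (hMv : M *ᵥ v = 0) : M.rank < Fintype.card ι := by
  have hker : 0 < Module.finrank K (LinearMap.ker M.mulVecLin) :=
    Module.finrank_pos_iff_exists_ne_zero.mpr
      ⟨⟨v, hMv⟩, fun h => hv (congrArg Subtype.val h)⟩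
  have := LinearMap.finrank_range_add_finrank_ker M.mulVecLin
  rw [Module.finrank_fintype_fun_eq_card] at this
  rw [rank]
  omega

variable [DecidableEq ι]

theorem det_eq_zero_of_transpose_eq_neg [CharZero K] {A : Matrix ι ι K}
    (hA : Aᵀ = -A) (hι : Odd (Fintype.card ι)) : A.det = 0 := by
  have h := det_transpose A
  rw [hA, det_neg, hι.neg_one_pow, neg_one_mul] at h
  exact self_eq_neg.mp h.symm

def observabilityMatrix (u : ι → K) (A : Matrix ι ι K) (k : ℕ) : Matrix (Fin k) ι K :=
  of fun i j => vecMul u (A ^ (i : ℕ)) j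

theorem observabilityMatrix_mulVec_eq_zero {u v : ι → K} {A : Matrix ι ι K}
    (k : ℕ) (hAv : A *ᵥ v = 0) (huv : u ⬝ᵥ v = 0) : observabilityMatrix u A k *ᵥ v = 0 := by
  funext i
  change vecMul u (A ^ (i : ℕ)) ⬝ᵥ v = 0
  rw [← dotProduct_mulVec]
  cases (i : ℕ) with
  | zero => simpa using huv
  | succ m => rw [pow_succ, ← mulVec_mulVec, hAv, mulVec_zero, dotProduct_zero]

end Matrix

section triA

variable (c : ℕ → ℝ)

theorem triA_transpose (n : ℕ) : (triA n c)ᵀ = -triA n c := by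
  ext i j
  rw [transpose_apply, neg_apply]
  simp only [triA, of_apply]
  split_ifs <;> first | simp | omega

theorem triA_mulVec_apply_zero {m : ℕ} (v : Fin (m + 2) → ℝ) :
    (triA (m + 2) c *ᵥ v) 0 = c 0 * v 1 := by
  rw [mulVec, dotProduct, Finset.sum_eq_single 1]
  · simp [triA]
  · intro j _ hj
    have hj : (j : ℕ) ≠ 1 := fun h => hj (Fin.ext h)
    simp [triA, hj.symm]
  · simp

theorem triA_mulVec_single_zero {n : ℕ} [NeZero n] (hc : c 0 = 0) :
    triA n c *ᵥ Pi.single 0 1 = 0 := by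
  ext i
  simp [triA, hc]

theorem exists_triA_mulVec_eq_zero {m : ℕ} (hm : Odd m) :
    ∃ v : Fin (m + 2) → ℝ, v ≠ 0 ∧ triA (m + 2) c *ᵥ v = 0 ∧ v 1 = 0 := by
  by_cases hc : c 0 = 0
  · exact ⟨Pi.single 0 1, by simp, triA_mulVec_single_zero c hc, by simp⟩
  have hdet : (triA (m + 2) c).det = 0 :=
    det_eq_zero_of_transpose_eq_neg (triA_transpose c _) (by simpa using hm.add_even even_two)
  obtain ⟨v, hv, hAv⟩ := exists_mulVec_eq_zero_iff.mpr hdet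
  have hrow : c 0 * v 1 = 0 := by rw [← triA_mulVec_apply_zero, hAv, Pi.zero_apply]
  exact ⟨v, hv, hAv, (mul_eq_zero.mp hrow).resolve_left hc⟩

end triA

theorem stmt_3 (N : ℕ) (hN : Odd N) (hα hβ : ℝ) (h : ℕ → ℝ) :
    (Matrix.of fun (i j : Fin (N + 2)) =>
        Matrix.vecMul (Pi.single 1 1) ((triA (N + 2) (chain hα hβ h)) ^ (i : ℕ)) j).rank
      < N + 2 := by
  obtain ⟨v, hv, hAv, hv1⟩ := exists_triA_mulVec_eq_zero (chain hα hβ h) hN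
  have hCv : Pi.single 1 1 ⬝ᵥ v = 0 := by simp [hv1]
  have := rank_lt_card_width_of_mulVec_eq_zero _ hv
    (observabilityMatrix_mulVec_eq_zero (N + 2) hAv hCv)
  rwa [Fintype.card_fin] at this
end

section
/- Let N be even, A the (N+2)×(N+2) tridiagonal antisymmetric matrix with superdiagonal (h_α, h_β, h_1, ..., h_{N-1}), and C the second standard basis covector. If all of h_α, h_β, h_1, ..., h_{N-1} are nonzero, then the observability matrix (C; CA; ...; CA^{N+1}) has full rank N+2, i.e., the pair (A, C) is observable. -/
open Matrix

/-!
Row `1` of `A ^ i` is supported on the columns `j ≤ i + 1` with `j ≡ i + 1 (mod 2)`, and its entry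
in column `i + 1` is `c 1 ⋯ c i`. The even rows of the observability matrix are therefore a
triangular system in the odd coordinates, so a kernel vector `w` vanishes there; since row
`2k + 1` is row `2k` times `A`, the same holds for `A w`. Finally, for even `j`,
`(A w) (j + 1) = -c j * w j + c (j + 1) * w (j + 2)` kills the even coordinates from the top down,
which needs the size `N + 2` to be even.
-/

open Finset

section TriA

variable {n : ℕ} (c : ℕ → ℝ)

lemma triA_apply_ne_zero {i j : Fin n} (h : triA n c i j ≠ 0) :
    (i : ℕ) + 1 = j ∨ (j : ℕ) + 1 = i := by
  by_contra! hij
  simp [triA, hij.1, hij.2] at h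

lemma triA_apply_of_succ_eq {i j : Fin n} (h : (i : ℕ) + 1 = j) : triA n c i j = c i := by
  simp [triA, h]

lemma triA_apply_of_eq_succ {i j : Fin n} (h : (i : ℕ) = j + 1) : triA n c i j = -c j := by
  simp [triA, h, show (j : ℕ) + 1 + 1 ≠ j by omega]

lemma triA_pow_apply_eq_zero (i : ℕ) {r j : Fin n}
    (h : (r : ℕ) + i < j ∨ Odd ((r : ℕ) + i + j)) : (triA n c ^ i) r j = 0 := by
  rw [Nat.odd_iff] at h
  induction i generalizing j with
  | zero => exact one_apply_ne fun hrj => by subst hrj; omega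
  | succ i ih =>
    rw [pow_succ, mul_apply]
    refine sum_eq_zero fun k _ => ?_
    by_cases hk : triA n c k j = 0
    · rw [hk, mul_zero]
    · have hadj := triA_apply_ne_zero c hk
      rw [ih (by omega), zero_mul]

lemma triA_pow_apply_of_eq_add (i : ℕ) {r j : Fin n} (h : (j : ℕ) = r + i) :
    (triA n c ^ i) r j = ∏ t ∈ Ico (r : ℕ) (r + i), c t := by
  induction i generalizing j with
  | zero => simp [Fin.ext (h.trans (add_zero _))]
  | succ i ih =>
    have hj' : (r : ℕ) + i < n := by omega
    rw [pow_succ, mul_apply, sum_eq_single ⟨r + i, hj'⟩, ih rfl,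
      triA_apply_of_succ_eq c (by simp [h, add_assoc]), ← add_assoc,
      prod_Ico_succ_top (Nat.le_add_right _ _)]
    · intro k _ hk
      by_cases hkj : triA n c k j = 0
      · rw [hkj, mul_zero]
      · have hadj := triA_apply_ne_zero c hkj
        have hk' : (k : ℕ) ≠ r + i := fun e => hk (Fin.ext e)
        rw [triA_pow_apply_eq_zero c i (by omega), zero_mul]
    · simp

end TriA

lemma apply_odd_eq_zero_of_triA_pow_even_rows {c : ℕ → ℝ} {n : ℕ}
    (hc : ∀ t, 1 ≤ t → t ≤ n → c t ≠ 0) {z : Fin (n + 2) → ℝ}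
    (hz : ∀ k, 2 * k + 1 < n + 2 → (triA (n + 2) c ^ (2 * k)) 1 ⬝ᵥ z = 0)
    {j : Fin (n + 2)} (hj : Odd (j : ℕ)) : z j = 0 := by
  obtain ⟨k, hj⟩ := hj
  induction k using Nat.strong_induction_on generalizing j with
  | _ k ih =>
    have hrow := hz k (by omega)
    rw [dotProduct, sum_eq_single j, triA_pow_apply_of_eq_add c _ (by simp [hj, add_comm])] at hrow
    · refine (mul_eq_zero.mp hrow).resolve_left (prod_ne_zero_iff.mpr fun t ht => ?_)
      rw [mem_Ico] at ht
      exact hc t (by simpa using ht.1) (by simp at ht; omega)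
    · intro j' _ hj'
      have hj'j : (j' : ℕ) ≠ j := fun e => hj' (Fin.ext e)
      rcases Nat.even_or_odd' j' with ⟨k', hk' | hk'⟩
      · rw [triA_pow_apply_eq_zero c _ (Or.inr (by simp [Nat.odd_iff]; omega)), zero_mul]
      · rcases Nat.lt_or_gt_of_ne hj'j with hlt | hgt
        · rw [ih k' (by omega) hk', mul_zero]
        · rw [triA_pow_apply_eq_zero c _ (Or.inl (by simp; omega)), zero_mul]
    · simp

lemma apply_even_eq_zero_of_triA_mulVec_odd {c : ℕ → ℝ} {n : ℕ} (hn : Even n)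
    (hc : ∀ t, Even t → t + 2 ≤ n → c t ≠ 0) {w : Fin n → ℝ}
    (hw : ∀ j : Fin n, Odd (j : ℕ) → (triA n c *ᵥ w) j = 0)
    {j : Fin n} (hj : Even (j : ℕ)) : w j = 0 := by
  have hj1 : (j : ℕ) + 1 < n := by
    rcases hn with ⟨m, rfl⟩; rcases hj with ⟨i, hi⟩; omega
  have hrow := hw ⟨j + 1, hj1⟩ (by simp [hj])
  rw [mulVec, dotProduct, sum_eq_single j, triA_apply_of_eq_succ c rfl] at hrow
  · exact (mul_eq_zero.mp hrow).resolve_left (neg_ne_zero.mpr (hc j hj (by omega)))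
  · intro k _ hkj
    by_cases hA : triA n c ⟨j + 1, hj1⟩ k = 0
    · rw [hA, zero_mul]
    · rcases triA_apply_ne_zero c hA with h | h
      · have hk : (k : ℕ) = j + 2 := by simpa using h.symm
        rw [apply_even_eq_zero_of_triA_mulVec_odd hn hc hw (j := k) (hk ▸ hj.add even_two),
          mul_zero]
      · exact absurd (Fin.ext (by simpa using h)) hkj
  · simp
termination_by n - j

lemma eq_zero_of_triA_pow_rows_dotProduct_eq_zero {c : ℕ → ℝ} {n : ℕ} (hn : Even n)
    (hc : ∀ t, t ≤ n → c t ≠ 0) {w : Fin (n + 2) → ℝ}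
    (hw : ∀ i, i < n + 2 → (triA (n + 2) c ^ i) 1 ⬝ᵥ w = 0) : w = 0 := by
  have hc' : ∀ t, 1 ≤ t → t ≤ n → c t ≠ 0 := fun t _ => hc t
  have hAw (j : Fin (n + 2)) (hj : Odd (j : ℕ)) : (triA (n + 2) c *ᵥ w) j = 0 :=
    apply_odd_eq_zero_of_triA_pow_even_rows hc' (fun k hk => by
      rw [dotProduct_mulVec, ← mul_apply_eq_vecMul, ← pow_succ]
      exact hw _ hk) hj
  funext j
  rcases Nat.even_or_odd (j : ℕ) with he | ho
  · exact apply_even_eq_zero_of_triA_mulVec_odd (hn.add even_two)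
      (fun t _ ht => hc t (by omega)) hAw he
  · exact apply_odd_eq_zero_of_triA_pow_even_rows hc' (fun k hk => hw _ (by omega)) ho

theorem stmt_4 (N : ℕ) (hN : Even N) (hα hβ : ℝ) (h : ℕ → ℝ)
    (h1 : hα ≠ 0) (h2 : hβ ≠ 0) (h3 : ∀ i, 1 ≤ i → i ≤ N - 1 → h i ≠ 0) :
    (Matrix.of fun (i j : Fin (N + 2)) =>
        Matrix.vecMul (Pi.single 1 1) ((triA (N + 2) (chain hα hβ h)) ^ (i : ℕ)) j).rank
      = N + 2 := by
  have hc : ∀ t, t ≤ N → chain hα hβ h t ≠ 0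
    | 0, _ => by simpa [chain] using h1
    | 1, _ => by simpa [chain] using h2
    | t + 2, ht => by simpa [chain] using h3 (t + 1) (by omega) (by omega)
  refine (rank_of_isUnit _ (mulVec_injective_iff_isUnit.mp ?_)).trans (Fintype.card_fin _)
  rw [← coe_mulVecLin, injective_iff_map_eq_zero]
  intro w hw
  refine eq_zero_of_triA_pow_rows_dotProduct_eq_zero hN hc fun i hi => ?_
  simpa [mulVec, single_one_vecMul] using congrFun hw ⟨i, hi⟩
end

section
/- Let Ã be the (n-1)×(n-1) matrix obtained by deleting the first row and column of the n×n tridiagonal antisymmetric matrix A(h) (so Ã = A((h_2,...,h_{n-1}))), and suppose a block-diagonal analysis gives: S̃ invertible with S̃ Ã = Ã' S̃, E = h_1 e_1 and E' = h'_1 e_1 with E^T = E'^T S̃ and S̃ E = E', and h_1, h'_1 ≠ 0. Then |h_1| = |h'_1|, |S̃_{11}| = 1, the first row and first column of S̃ vanish off the (1,1) entry, and the intertwining relation reduces to the same problem in dimension n-2. -/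
open Matrix

/-! `S̃` maps `h₁ e₁` to `h₁' e₁` from both sides, so `S̃₁₁ h₁ = h₁'` and `h₁' S̃₁₁ = h₁`, whence
`S̃₁₁² = 1`, and the rest of the first row and column of `S̃` vanishes. Thus `S̃` is block diagonal,
and deleting the first row and column of `S̃ Ã = Ã' S̃` gives the same relation one dimension
lower, because deleting them from `A(h)` gives `A` of the shifted `h`. -/

namespace Matrix

section SingleVector

variable {n R : Type*} [Fintype n] [DecidableEq n] [NonUnitalNonAssocSemiring R]
  {S : Matrix n n R} {i j : n} {a b : R}

theorem diag_mul_of_mulVec_single (h : S *ᵥ Pi.single i a = Pi.single i b) :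
    S i i * a = b := by
  simpa [mulVec_single] using congrFun h i

theorem apply_eq_zero_of_mulVec_single [NoZeroDivisors R]
    (h : S *ᵥ Pi.single i a = Pi.single i b) (ha : a ≠ 0) (hj : j ≠ i) : S j i = 0 := by
  have hji : S j i * a = 0 := by simpa [mulVec_single, hj] using congrFun h j
  exact (mul_eq_zero.mp hji).resolve_right ha

theorem mul_diag_of_single_vecMul (h : Pi.single i a ᵥ* S = Pi.single i b) :
    a * S i i = b := by
  simpa using congrFun h i

theorem apply_eq_zero_of_single_vecMul [NoZeroDivisors R]
    (h : Pi.single i a ᵥ* S = Pi.single i b) (ha : a ≠ 0) (hj : j ≠ i) : S i j = 0 := by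
  have hij : a * S i j = 0 := by simpa [hj] using congrFun h j
  exact (mul_eq_zero.mp hij).resolve_left ha

end SingleVector

theorem submatrix_succ_mul {k m l : ℕ} {R : Type*} [NonUnitalNonAssocSemiring R]
    (A : Matrix (Fin (k + 1)) (Fin (m + 1)) R) (B : Matrix (Fin (m + 1)) (Fin (l + 1)) R)
    (h : ∀ i j, A (Fin.succ i) 0 * B 0 (Fin.succ j) = 0) :
    (A * B).submatrix Fin.succ Fin.succ
      = A.submatrix Fin.succ Fin.succ * B.submatrix Fin.succ Fin.succ := by
  ext i j
  simp [mul_apply, Fin.sum_univ_succ, h]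

end Matrix

theorem triA_submatrix_succ (m : ℕ) (c : ℕ → ℝ) :
    (triA (m + 1) c).submatrix Fin.succ Fin.succ = triA m (fun k => c (k + 1)) := by
  ext i j
  simp [triA, Fin.val_succ]

theorem eq_one_or_eq_neg_one_of_mul_eq_of_mul_eq {R : Type*} [CommRing R] [NoZeroDivisors R]
    {s a b : R} (hab : s * a = b) (hba : b * s = a) (ha : a ≠ 0) : s = 1 ∨ s = -1 := by
  have hss : s * s * a = 1 * a := by rw [mul_assoc, hab, one_mul, mul_comm, hba]
  exact mul_self_eq_one_iff.mp (mul_right_cancel₀ ha hss)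

theorem stmt_7_general (m : ℕ) (c c' : ℕ → ℝ)
    (h1 h1' : ℝ) (hh1 : h1 ≠ 0)
    (St : Matrix (Fin (m + 1)) (Fin (m + 1)) ℝ)
    (hE1 : (Pi.single (0 : Fin (m + 1)) h1 : Fin (m + 1) → ℝ)
            = Matrix.vecMul (Pi.single 0 h1') St)
    (hE2 : St.mulVec (Pi.single 0 h1) = Pi.single 0 h1')
    (hAS : St * triA (m + 1) c = triA (m + 1) c' * St) :
    |h1| = |h1'|
    ∧ |St 0 0| = 1
    ∧ (∀ j : Fin (m + 1), j ≠ 0 → St 0 j = 0 ∧ St j 0 = 0)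
    ∧ ∃ s : ℝ, (s = 1 ∨ s = -1) ∧
        (s • St.submatrix Fin.succ Fin.succ) * triA m (fun k => c (k + 1))
          = triA m (fun k => c' (k + 1)) * (s • St.submatrix Fin.succ Fin.succ) := by
  have hcorner : St 0 0 * h1 = h1' := diag_mul_of_mulVec_single hE2
  have hcorner_abs : |St 0 0| = 1 := by
    rcases eq_one_or_eq_neg_one_of_mul_eq_of_mul_eq hcorner
      (mul_diag_of_single_vecMul hE1.symm) hh1 with h | h <;> simp [h]
  have habs : |h1| = |h1'| := by rw [← hcorner, abs_mul, hcorner_abs, one_mul]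
  have hh1' : h1' ≠ 0 := abs_ne_zero.mp (habs ▸ abs_ne_zero.mpr hh1)
  have hcol (j : Fin (m + 1)) (hj : j ≠ 0) : St j 0 = 0 :=
    apply_eq_zero_of_mulVec_single hE2 hh1 hj
  have hrow (j : Fin (m + 1)) (hj : j ≠ 0) : St 0 j = 0 :=
    apply_eq_zero_of_single_vecMul hE1.symm hh1' hj
  refine ⟨habs, hcorner_abs, fun j hj => ⟨hrow j hj, hcol j hj⟩, 1, Or.inl rfl, ?_⟩
  rw [one_smul, ← triA_submatrix_succ, ← triA_submatrix_succ,
    ← submatrix_succ_mul _ _ (fun i _ => by simp [hcol i.succ i.succ_ne_zero]),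
    ← submatrix_succ_mul _ _ (fun _ j => by simp [hrow j.succ j.succ_ne_zero]), hAS]

/-- Inductive step of the similarity-transformation argument: `Ã = triA (m+1) c`
is the matrix obtained from the n×n tridiagonal antisymmetric matrix by deleting
the first row and column, `E = h₁ e₁`, `E' = h₁' e₁`, and `S̃` intertwines. -/
theorem stmt_7 (m : ℕ) (c c' : ℕ → ℝ)
    (hc : ∀ i, i < m → c i ≠ 0) (hc' : ∀ i, i < m → c' i ≠ 0)
    (h1 h1' : ℝ) (hh1 : h1 ≠ 0) (hh1' : h1' ≠ 0)
    (St : Matrix (Fin (m + 1)) (Fin (m + 1)) ℝ) (hSt : IsUnit St)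
    (hE1 : (Pi.single (0 : Fin (m + 1)) h1 : Fin (m + 1) → ℝ)
            = Matrix.vecMul (Pi.single 0 h1') St)
    (hE2 : St.mulVec (Pi.single 0 h1) = Pi.single 0 h1')
    (hAS : St * triA (m + 1) c = triA (m + 1) c' * St) :
    |h1| = |h1'|
    ∧ |St 0 0| = 1
    ∧ (∀ j : Fin (m + 1), j ≠ 0 → St 0 j = 0 ∧ St j 0 = 0)
    ∧ ∃ s : ℝ, (s = 1 ∨ s = -1) ∧
        (s • St.submatrix Fin.succ Fin.succ) * triA m (fun k => c (k + 1))
          = triA m (fun k => c' (k + 1)) * (s • St.submatrix Fin.succ Fin.succ) :=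
  stmt_7_general m c c' h1 h1' hh1 St hE1 hE2 hAS
end

section
/- Let N be odd, A the (N+2)×(N+2) tridiagonal antisymmetric matrix with superdiagonal (h_α, h_β, h_1, ..., h_{N-1}), C = e_2^T, and P the (N+2)×(N+2) matrix whose first N+1 rows are C, CA, ..., CA^N and whose last row is (0,...,0,1). Write P = [[P̄, p],[0,1]]. Then p = (0, ..., 0, h_β ∏_{i=1}^{N-1} h_i)^T. -/
/-!
Every matrix `A` with `A i j = 0` for `j > i + 1` moves the support of a row vector at most one
step to the right. Hence `e_s A^k` vanishes beyond column `s + k`, and its entry there is the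
product of the `k` superdiagonal entries crossed on the way. The tridiagonal `A` of the spin
chain is such a matrix, and for `s = 1`, `k = N` this product is `h_β h_1 ⋯ h_{N-1}`.
-/

open Matrix

section LowerHessenberg

variable {R : Type*} [CommSemiring R] {n : ℕ} {A : Matrix (Fin n) (Fin n) R}

theorem vecMul_single_pow_apply_eq_zero (hA : ∀ i j : Fin n, (i : ℕ) + 1 < j → A i j = 0)
    (s : Fin n) (k : ℕ) (j : Fin n) (hj : (s : ℕ) + k < j) :
    vecMul (Pi.single s 1) (A ^ k) j = 0 := by
  induction k generalizing j with
  | zero =>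
    rw [pow_zero, vecMul_one]
    exact Pi.single_eq_of_ne (Fin.ne_of_val_ne (by omega) : j ≠ s) _
  | succ k ih =>
    rw [pow_succ, ← vecMul_vecMul]
    change ∑ i, _ * A i j = 0
    refine Finset.sum_eq_zero fun i _ => ?_
    by_cases hi : (s : ℕ) + k < i
    · rw [ih i hi, zero_mul]
    · rw [hA i j (by omega), mul_zero]

theorem vecMul_single_pow_apply_eq_prod (hA : ∀ i j : Fin n, (i : ℕ) + 1 < j → A i j = 0)
    {c : ℕ → R} (hc : ∀ i j : Fin n, (i : ℕ) + 1 = j → A i j = c i)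
    (s : Fin n) (k : ℕ) (j : Fin n) (hj : (j : ℕ) = s + k) :
    vecMul (Pi.single s 1) (A ^ k) j = ∏ i ∈ Finset.Ico (s : ℕ) (s + k), c i := by
  induction k generalizing j with
  | zero =>
    rw [pow_zero, vecMul_one, show j = s from Fin.ext (by omega)]
    simp
  | succ k ih =>
    let i₀ : Fin n := ⟨s + k, by omega⟩
    have hi₀ : (i₀ : ℕ) = s + k := rfl
    rw [pow_succ, ← vecMul_vecMul, ← add_assoc, Finset.prod_Ico_succ_top (by omega)]
    change ∑ i, _ * A i j = _
    rw [Finset.sum_eq_single i₀, ih i₀ rfl, hc i₀ j (by omega)]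
    · intro i _ hi
      rcases lt_or_gt_of_ne (Fin.val_ne_of_ne hi) with hlt | hgt
      · rw [hA i j (by omega), mul_zero]
      · rw [vecMul_single_pow_apply_eq_zero hA s k i hgt, zero_mul]
    · exact fun hi₀_notMem => (hi₀_notMem (Finset.mem_univ i₀)).elim

end LowerHessenberg

theorem triA_apply_of_add_one_lt {n : ℕ} (c : ℕ → ℝ) (i j : Fin n) (hij : (i : ℕ) + 1 < j) :
    triA n c i j = 0 := by
  simp only [triA, of_apply]
  rw [if_neg (by omega), if_neg (by omega)]

theorem triA_apply_of_add_one_eq {n : ℕ} (c : ℕ → ℝ) (i j : Fin n) (hij : (i : ℕ) + 1 = j) :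
    triA n c i j = c i := by
  simp only [triA, of_apply, if_pos hij]

theorem prod_Ico_chain (hα hβ : ℝ) (h : ℕ → ℝ) {N : ℕ} (hN : 1 ≤ N) :
    ∏ i ∈ Finset.Ico 1 (1 + N), chain hα hβ h i = hβ * ∏ i ∈ Finset.Icc 1 (N - 1), h i := by
  obtain ⟨M, rfl⟩ := Nat.exists_eq_add_of_le' hN
  rw [Finset.prod_eq_prod_Ico_succ_bot (by omega), add_comm 1 (M + 1),
    ← Finset.prod_Ico_add' _ 1 (M + 1) 1, Nat.add_sub_cancel, ← Finset.Ico_add_one_right_eq_Icc]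
  refine congrArg₂ _ rfl (Finset.prod_congr rfl fun i hi => ?_)
  simp only [Finset.mem_Ico] at hi
  simp only [chain, if_neg (show i + 1 ≠ 0 by omega), if_neg (show i + 1 ≠ 1 by omega),
    Nat.add_sub_cancel]

/-- The last column of the first N+1 rows `C, CA, ..., CA^N` of the matrix `P`
is `(0, ..., 0, h_β ∏_{i=1}^{N-1} h_i)ᵀ`. -/
theorem stmt_13 (N : ℕ) (hN : Odd N) (hα hβ : ℝ) (h : ℕ → ℝ) (k : Fin (N + 1)) :
    Matrix.vecMul (Pi.single 1 1) ((triA (N + 2) (chain hα hβ h)) ^ (k : ℕ))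
        ⟨N + 1, by omega⟩
      = if (k : ℕ) = N then hβ * ∏ i ∈ Finset.Icc 1 (N - 1), h i else 0 := by
  have hA := triA_apply_of_add_one_lt (n := N + 2) (chain hα hβ h)
  have hc := triA_apply_of_add_one_eq (n := N + 2) (chain hα hβ h)
  split_ifs with hk
  · rw [vecMul_single_pow_apply_eq_prod hA hc 1 k _ (by simp only [Fin.val_one]; omega),
      Fin.val_one, hk, prod_Ico_chain hα hβ h hN.pos]
  · exact vecMul_single_pow_apply_eq_zero hA 1 k _ (by simp only [Fin.val_one]; omega)
end

section
/- Let A be the 4×4 real matrix [[0,0,0,-4(a^2+b^2)^2],[1,0,0,0],[0,1,0,-5a^2-5b^2],[0,0,1,0]], B=(1,0,0,0)^T, C=(0,-a,0,a^3+4ab^2) with a ≠ 0, b ≠ 0. If (a', b') with a' ≠ 0, b' ≠ 0 yields the same matrices up to an invertible S with SA(a,b)=A(a',b')S, SB=B, C(a,b)=C(a',b')S, then S = I, a = a', and |b| = |b'|. -/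
open Matrix

/-- Minimal-realization `A` matrix of the 3-spin two-qubit-sensor system,
with `a = h_α`, `b = h_β`. -/
def Amin (a b : ℝ) : Matrix (Fin 4) (Fin 4) ℝ :=
  !![0, 0, 0, -4 * (a ^ 2 + b ^ 2) ^ 2;
     1, 0, 0, 0;
     0, 1, 0, -5 * a ^ 2 - 5 * b ^ 2;
     0, 0, 1, 0]

/-- Minimal-realization `C` matrix. -/
def Cmin (a b : ℝ) : Matrix (Fin 1) (Fin 4) ℝ :=
  !![0, -a, 0, a ^ 3 + 4 * a * b ^ 2]

/-!
`A(a, b)` maps `e₀ ↦ e₁ ↦ e₂ ↦ e₃`, so `e₀` is a cyclic vector and the Krylov basis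
`e₀, A e₀, A² e₀, A³ e₀` is the standard basis for every `(a, b)`. A similarity `S` with
`S A = A' S` and `S e₀ = e₀` maps Krylov basis to Krylov basis, hence `S = 1`. The two
realizations then coincide, and comparing entries of `C` and `A` gives `a = a'` and
`a² + b² = a'² + b'²`.
-/

section Krylov

variable {R : Type*} [Semiring R] {n : ℕ}

theorem Matrix.eq_one_of_mulVec_single_eq {M : Matrix (Fin n) (Fin n) R}
    (h : ∀ j, M *ᵥ Pi.single j 1 = Pi.single j 1) : M = 1 := by
  ext i j
  simpa [mulVec_single_one, one_apply, Pi.single_apply, eq_comm] using congrFun (h j) i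

theorem Matrix.eq_one_of_semiconjBy_of_mulVec_single_zero
    {S A A' : Matrix (Fin (n + 1)) (Fin (n + 1)) R} (hSA : SemiconjBy S A A')
    (hA : ∀ j : Fin n, A *ᵥ Pi.single j.castSucc 1 = Pi.single j.succ 1)
    (hA' : ∀ j : Fin n, A' *ᵥ Pi.single j.castSucc 1 = Pi.single j.succ 1)
    (hS : S *ᵥ Pi.single 0 1 = Pi.single 0 1) : S = 1 := by
  refine eq_one_of_mulVec_single_eq fun j => ?_
  induction j using Fin.induction with
  | zero => exact hS
  | succ j ih =>
    calc S *ᵥ Pi.single j.succ 1 = S *ᵥ (A *ᵥ Pi.single j.castSucc 1) := by rw [hA]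
      _ = A' *ᵥ (S *ᵥ Pi.single j.castSucc 1) := by rw [mulVec_mulVec, hSA.eq, mulVec_mulVec]
      _ = Pi.single j.succ 1 := by rw [ih, hA']

end Krylov

theorem Amin_mulVec_single_castSucc (a b : ℝ) (j : Fin 3) :
    Amin a b *ᵥ Pi.single j.castSucc 1 = Pi.single j.succ 1 := by
  ext i
  fin_cases j <;> fin_cases i <;> simp [Amin]

theorem eq_of_Cmin_eq {a b a' b' : ℝ} (h : Cmin a b = Cmin a' b') : a = a' := by
  simpa [Cmin] using congrFun (congrFun h 0) 1

theorem sq_add_sq_eq_of_Amin_eq {a b a' b' : ℝ} (h : Amin a b = Amin a' b') :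
    a ^ 2 + b ^ 2 = a' ^ 2 + b' ^ 2 := by
  have h23 := congrFun (congrFun h 2) 3
  simp only [Amin, of_apply, cons_val', cons_val, empty_val', cons_val_fin_one] at h23
  linarith

theorem stmt_19_general (a b a' b' : ℝ)
    (S : Matrix (Fin 4) (Fin 4) ℝ)
    (h1 : S * Amin a b = Amin a' b' * S)
    (h2 : S * (!![1; 0; 0; 0] : Matrix (Fin 4) (Fin 1) ℝ) = !![1; 0; 0; 0])
    (h3 : Cmin a b = Cmin a' b' * S) :
    S = 1 ∧ a = a' ∧ |b| = |b'| := by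
  have hB : (!![1; 0; 0; 0] : Matrix (Fin 4) (Fin 1) ℝ) =
      replicateCol (Fin 1) (Pi.single 0 1) := by
    ext i j
    fin_cases i <;> simp
  have hSe₀ : S *ᵥ Pi.single 0 1 = Pi.single 0 1 :=
    replicateCol_injective (ι := Fin 1) (by rw [replicateCol_mulVec, ← hB, h2])
  have hS : S = 1 := eq_one_of_semiconjBy_of_mulVec_single_zero h1
    (Amin_mulVec_single_castSucc a b) (Amin_mulVec_single_castSucc a' b') hSe₀
  subst hS
  rw [Matrix.one_mul, Matrix.mul_one] at h1
  rw [Matrix.mul_one] at h3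
  obtain rfl := eq_of_Cmin_eq h3
  have hb : b ^ 2 = b' ^ 2 := by linarith [sq_add_sq_eq_of_Amin_eq h1]
  exact ⟨rfl, rfl, (sq_eq_sq_iff_abs_eq_abs b b').mp hb⟩

theorem stmt_19 (a b a' b' : ℝ) (ha : a ≠ 0) (hb : b ≠ 0) (ha' : a' ≠ 0) (hb' : b' ≠ 0)
    (S : Matrix (Fin 4) (Fin 4) ℝ) (hS : IsUnit S)
    (h1 : S * Amin a b = Amin a' b' * S)
    (h2 : S * (!![1; 0; 0; 0] : Matrix (Fin 4) (Fin 1) ℝ) = !![1; 0; 0; 0])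
    (h3 : Cmin a b = Cmin a' b' * S) :
    S = 1 ∧ a = a' ∧ |b| = |b'| :=
  stmt_19_general a b a' b' S h1 h2 h3
end
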